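/- Let P be a finite chordal polynomial set in K[x_1,...,x_n] such that x_1 < ... < x_n is a perfect elimination ordering of G(P), and let red̄_i(P) for i = n, ..., 1 be obtained from P by any sequence of reduction steps. Then G(red̄_i(P)) ⊆ G(P) for each i = n, ..., 1. -/

import Mathlib

open MvPolynomial

variable {K : Type*} [Field K] {n : ℕ}

/-- The set of variables effectively appearing in a polynomial. -/
def psupp (F : MvPolynomial (Fin n) K) : Set (Fin n) := ↑F.vars

/-- The set of variables appearing in a set of polynomials. -/
def ssupp (P : Set (MvPolynomial (Fin n) K)) : Set (Fin n) :=
  ⋃ F ∈ P, psupp F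

/-- Adjacency in the associated graph `G(P)`: `p ≠ q` and some polynomial of `P`
contains both variables. -/
def adjG (P : Set (MvPolynomial (Fin n) K)) (p q : Fin n) : Prop :=
  p ≠ q ∧ ∃ F ∈ P, p ∈ psupp F ∧ q ∈ psupp F

/-- `G(P) ⊆ G(Q)`: every edge of `G(P)` is an edge of `G(Q)`. -/
def subG (P Q : Set (MvPolynomial (Fin n) K)) : Prop :=
  ∀ p q, adjG P p q → adjG Q p q

/-- The natural ordering `x_1 < ... < x_n` of the variables is a perfect elimination
ordering of `G(P)`; in particular `G(P)` is chordal. -/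
def isPEO (P : Set (MvPolynomial (Fin n) K)) : Prop :=
  ∀ p q k : Fin n, p < k → q < k → p ≠ q → adjG P p k → adjG P q k → adjG P p q

/-- `F` is nonconstant with leading variable `x_k`. -/
def hasLv (F : MvPolynomial (Fin n) K) (k : Fin n) : Prop :=
  k ∈ psupp F ∧ ∀ j ∈ psupp F, j ≤ k

/-- `P^(k)`: the polynomials of `P` with leading variable `x_k`. -/
def levelSet (P : Set (MvPolynomial (Fin n) K)) (k : Fin n) :
    Set (MvPolynomial (Fin n) K) :=
  {F | F ∈ P ∧ hasLv F k}

/-- A reduction step at level `i` with chosen polynomial `T` and produced set `R`: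
`T` is nonconstant with leading variable `x_i` and `supp T ⊆ supp (P^(i))`, `R` is a
finite set of polynomials with `supp R ⊆ supp (P^(i)) \ {x_i}`, and the result is
`(P \ P^(i)) ∪ {T} ∪ R`. -/
def RedStep (i : Fin n) (T : MvPolynomial (Fin n) K) (R : Set (MvPolynomial (Fin n) K))
    (P P' : Set (MvPolynomial (Fin n) K)) : Prop :=
  hasLv T i ∧ psupp T ⊆ ssupp (levelSet P i) ∧ R.Finite ∧
    ssupp R ⊆ ssupp (levelSet P i) \ {i} ∧
    P' = (P \ levelSet P i) ∪ {T} ∪ R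

/-- A reduction step at level `i` with arbitrary choices (identity if `P^(i) = ∅`). -/
def RedStepAny (i : Fin n) (P P' : Set (MvPolynomial (Fin n) K)) : Prop :=
  (levelSet P i = ∅ ∧ P' = P) ∨ ∃ T R, RedStep i T R P P'

/-!
Every edge produced by a reduction step at level `i` joins two variables of
`supp (P^(i))`. Inductively `G(Q) ⊆ G(P)` for the current set `Q`, so each variable of
`supp (Q^(i))` other than `x_i` is a smaller neighbour of `x_i` in `G(P)`; as the ordering is
a perfect elimination ordering of `G(P)`, these variables together with `x_i` form a clique,
and hence the new edges already lie in `G(P)`.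
-/

lemma adjG.symm {P : Set (MvPolynomial (Fin n) K)} {p q : Fin n} (h : adjG P p q) :
    adjG P q p := by
  obtain ⟨hne, F, hF, hp, hq⟩ := h
  exact ⟨hne.symm, F, hF, hq, hp⟩

lemma subG_refl (P : Set (MvPolynomial (Fin n) K)) : subG P P := fun _ _ => id

lemma adjG_and_lt_of_mem_ssupp_levelSet {P Q : Set (MvPolynomial (Fin n) K)} {i : Fin n}
    {p : Fin n} (hQ : subG Q P) (hp : p ∈ ssupp (levelSet Q i)) (hpi : p ≠ i) :
    adjG P p i ∧ p < i := by
  obtain ⟨F, ⟨hFQ, hiF, hle⟩, hpF⟩ : ∃ F ∈ levelSet Q i, p ∈ psupp F := by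
    simpa [ssupp] using hp
  exact ⟨hQ _ _ ⟨hpi, F, hFQ, hpF, hiF⟩, lt_of_le_of_ne (hle p hpF) hpi⟩

lemma adjG_of_mem_ssupp_levelSet_of_ne {P Q : Set (MvPolynomial (Fin n) K)} {i : Fin n}
    (hpeo : isPEO P) (hQ : subG Q P) {p q : Fin n}
    (hp : p ∈ ssupp (levelSet Q i)) (hq : q ∈ ssupp (levelSet Q i)) (hpq : p ≠ q) :
    adjG P p q := by
  by_cases hpi : p = i
  · subst hpi
    exact (adjG_and_lt_of_mem_ssupp_levelSet hQ hq (Ne.symm hpq)).1.symm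
  by_cases hqi : q = i
  · subst hqi
    exact (adjG_and_lt_of_mem_ssupp_levelSet hQ hp hpi).1
  obtain ⟨hap, hlp⟩ := adjG_and_lt_of_mem_ssupp_levelSet hQ hp hpi
  obtain ⟨haq, hlq⟩ := adjG_and_lt_of_mem_ssupp_levelSet hQ hq hqi
  exact hpeo p q i hlp hlq hpq hap haq

lemma subG_of_redStep {P Q Q' : Set (MvPolynomial (Fin n) K)} {i : Fin n}
    {T : MvPolynomial (Fin n) K} {R : Set (MvPolynomial (Fin n) K)}
    (hpeo : isPEO P) (hQ : subG Q P) (h : RedStep i T R Q Q') : subG Q' P := by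
  obtain ⟨-, hTs, -, hRs, rfl⟩ := h
  rintro p q ⟨hne, F, (⟨hFQ, -⟩ | rfl) | hFR, hp, hq⟩
  · exact hQ _ _ ⟨hne, F, hFQ, hp, hq⟩
  · exact adjG_of_mem_ssupp_levelSet_of_ne hpeo hQ (hTs hp) (hTs hq) hne
  · have hsupp : psupp F ⊆ ssupp R := Set.subset_biUnion_of_mem hFR
    exact adjG_of_mem_ssupp_levelSet_of_ne hpeo hQ (hRs (hsupp hp)).1 (hRs (hsupp hq)).1 hne

lemma subG_of_redStepAny {P Q Q' : Set (MvPolynomial (Fin n) K)} {i : Fin n}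
    (hpeo : isPEO P) (hQ : subG Q P) (h : RedStepAny i Q Q') : subG Q' P := by
  rcases h with ⟨-, rfl⟩ | ⟨T, R, h⟩
  · exact hQ
  · exact subG_of_redStep hpeo hQ h

theorem statement4_general {K : Type*} [Field K] {n : ℕ}
    (P : Set (MvPolynomial (Fin n) K)) (hpeo : isPEO P)
    (S : ℕ → Set (MvPolynomial (Fin n) K)) (hSn : S n = P)
    (hstep : ∀ i (h : i < n), RedStepAny ⟨i, h⟩ (S (i + 1)) (S i)) :
    ∀ i ≤ n, subG (S i) P := by
  intro i hi
  induction hi using Nat.decreasingInduction with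
  | self => exact hSn ▸ subG_refl P
  | of_succ k hk ih => exact subG_of_redStepAny hpeo ih (hstep k hk)

/-- let `P` be a finite chordal polynomial set whose natural variable
ordering is a perfect elimination ordering, and let the sets `S i` (`i = n, ..., 0`,
with `S n = P` and `S i = red_{i+1}(S (i+1))`) be obtained from `P` by any sequence
of reduction steps.  Then `G(S i) ⊆ G(P)` for each `i ≤ n`. -/
theorem statement4 {K : Type*} [Field K] {n : ℕ}
    (P : Set (MvPolynomial (Fin n) K)) (hfin : P.Finite) (hpeo : isPEO P)
    (S : ℕ → Set (MvPolynomial (Fin n) K)) (hSn : S n = P)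
    (hstep : ∀ i (h : i < n), RedStepAny ⟨i, h⟩ (S (i + 1)) (S i)) :
    ∀ i ≤ n, subG (S i) P :=
  statement4_general P hpeo S hSn hstep
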